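/- arXiv:1703.08765 — 6 statements merged into one kernel-verified Lean document; each statement's English description precedes it below -/
import Mathlib

section
/- For n ≥ 5, the lattice Λₙ = {a ∈ ℤⁿ : a₁ ≡ ⋯ ≡ aₙ (mod 2)} with the Euclidean norm is non-standard: no ℤ-basis b₁,…,bₙ of Λₙ satisfies ‖bᵢ‖₂ = λᵢ for all i, where λ₁,…,λₙ are the successive minima of Λₙ. -/
/-!
Each vector `2 • eⱼ` lies in `Λₙ` and has length `2`, so every successive minimum is at most `2`.
A vector of `Λₙ` of length at most `2 < √n` has a zero coordinate, and since all its coordinates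
have the same parity, they are all even. A basis realizing the successive minima would therefore
generate a sublattice of `(2ℤ)ⁿ`, which misses `(1, …, 1) ∈ Λₙ`.
-/

/-- The lattice Λₙ of integer vectors all of whose coordinates are congruent mod 2. -/
def LatticeMod2 (n : ℕ) : Set (EuclideanSpace ℝ (Fin n)) :=
  {x | ∃ a : Fin n → ℤ, (∀ i, x i = a i) ∧ ∀ i j, a i % 2 = a j % 2}

/-- The i-th successive minimum of a lattice Λ ⊆ ℝⁿ (Euclidean norm). -/
noncomputable def succMin (n : ℕ) (Λ : Set (EuclideanSpace ℝ (Fin n))) (i : ℕ) : ℝ :=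
  sInf {r : ℝ | i ≤ Module.finrank ℝ (Submodule.span ℝ (Λ ∩ Metric.closedBall 0 r))}

open Finset

theorem succMin_le_of_le_finrank {n i : ℕ} {Λ : Set (EuclideanSpace ℝ (Fin n))} {r : ℝ}
    (hi : 1 ≤ i) (h : i ≤ Module.finrank ℝ (Submodule.span ℝ (Λ ∩ Metric.closedBall 0 r))) :
    succMin n Λ i ≤ r := by
  refine csInf_le ⟨0, fun s hs => ?_⟩ h
  by_contra! hneg
  rw [Set.mem_ofPred_eq, Metric.closedBall_eq_empty.mpr hneg, Set.inter_empty,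
    Submodule.span_empty, finrank_bot] at hs
  omega

theorem single_two_mem_latticeMod2 (n : ℕ) (j : Fin n) :
    EuclideanSpace.single j (2 : ℝ) ∈ LatticeMod2 n := by
  refine ⟨Pi.single j 2, fun i => ?_, fun i k => ?_⟩
  · by_cases h : i = j <;> simp [h]
  · by_cases hi : i = j <;> by_cases hk : k = j <;> simp [hi, hk]

theorem span_latticeMod2_inter_closedBall_two (n : ℕ) :
    Submodule.span ℝ (LatticeMod2 n ∩ Metric.closedBall 0 2) = ⊤ := by
  rw [eq_top_iff, ← (EuclideanSpace.basisFun (Fin n) ℝ).toBasis.span_eq, Submodule.span_le]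
  rintro _ ⟨j, rfl⟩
  have hsingle : EuclideanSpace.single j (2 : ℝ) ∈ LatticeMod2 n ∩ Metric.closedBall 0 2 :=
    ⟨single_two_mem_latticeMod2 n j, by simp⟩
  have hbasis : (EuclideanSpace.basisFun (Fin n) ℝ).toBasis j
      = (2 : ℝ)⁻¹ • EuclideanSpace.single j (2 : ℝ) := by
    ext k
    by_cases h : k = j <;> simp [h]
  rw [hbasis]
  exact Submodule.smul_mem _ _ (Submodule.subset_span hsingle)

theorem succMin_latticeMod2_le_two {n i : ℕ} (hi : 1 ≤ i) (hin : i ≤ n) :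
    succMin n (LatticeMod2 n) i ≤ 2 :=
  succMin_le_of_le_finrank hi <| by
    rwa [span_latticeMod2_inter_closedBall_two, finrank_top, finrank_euclideanSpace_fin]

def evenLattice (n : ℕ) : Submodule ℤ (EuclideanSpace ℝ (Fin n)) where
  carrier := {x | ∀ j, ∃ k : ℤ, x j = 2 * k}
  add_mem' := by
    rintro x y hx hy j
    obtain ⟨k, hk⟩ := hx j
    obtain ⟨l, hl⟩ := hy j
    exact ⟨k + l, by simp only [PiLp.add_apply, hk, hl]; push_cast; ring⟩
  zero_mem' := fun _ => ⟨0, by simp⟩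
  smul_mem' := by
    rintro c x hx j
    obtain ⟨k, hk⟩ := hx j
    exact ⟨c * k, by simp only [PiLp.smul_apply, zsmul_eq_mul, hk]; push_cast; ring⟩

theorem exists_eq_zero_of_sum_sq_lt {ι : Type*} [Fintype ι] (a : ι → ℤ)
    (h : ∑ j, a j ^ 2 < Fintype.card ι) : ∃ j, a j = 0 := by
  by_contra! hne
  have hsum : ∑ _j : ι, (1 : ℤ) ≤ ∑ j, a j ^ 2 :=
    sum_le_sum fun j _ => (one_le_sq_iff_one_le_abs _).mpr (Int.one_le_abs (hne j))
  rw [sum_const, card_univ, nsmul_one] at hsum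
  omega

theorem mem_evenLattice_of_norm_sq_lt {n : ℕ} {x : EuclideanSpace ℝ (Fin n)}
    (hx : x ∈ LatticeMod2 n) (hnorm : ‖x‖ ^ 2 < n) : x ∈ evenLattice n := by
  obtain ⟨a, hxa, hpar⟩ := hx
  have hsum : ((∑ j, a j ^ 2 : ℤ) : ℝ) < n := by
    simpa [EuclideanSpace.norm_sq_eq, hxa] using hnorm
  obtain ⟨j₀, hj₀⟩ := exists_eq_zero_of_sum_sq_lt a (by rw [Fintype.card_fin]; exact_mod_cast hsum)
  intro j
  obtain ⟨k, hk⟩ : (2 : ℤ) ∣ a j := Int.dvd_of_emod_eq_zero (by simpa [hj₀] using hpar j j₀)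
  exact ⟨k, by rw [hxa, hk]; push_cast; rfl⟩

theorem one_mem_latticeMod2 (n : ℕ) :
    (WithLp.toLp 2 (fun _ => (1 : ℝ)) : EuclideanSpace ℝ (Fin n)) ∈ LatticeMod2 n :=
  ⟨fun _ => 1, fun _ => by simp, fun _ _ => rfl⟩

theorem one_notMem_evenLattice {n : ℕ} (hn : 0 < n) :
    (WithLp.toLp 2 (fun _ => (1 : ℝ)) : EuclideanSpace ℝ (Fin n)) ∉ evenLattice n := by
  intro h
  obtain ⟨k, hk⟩ := h ⟨0, hn⟩
  have hk' : ((2 * k : ℤ) : ℝ) = 1 := by push_cast; exact hk.symm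
  have : 2 * k = 1 := by exact_mod_cast hk'
  omega

/-- For n ≥ 5, the lattice Λₙ is non-standard: no ℤ-basis achieves the successive minima. -/
theorem stmt_5 (n : ℕ) (hn : 5 ≤ n) :
    ¬ ∃ b : Fin n → EuclideanSpace ℝ (Fin n),
      LinearIndependent ℝ b ∧
      ((Submodule.span ℤ (Set.range b) :
          Submodule ℤ (EuclideanSpace ℝ (Fin n))) : Set (EuclideanSpace ℝ (Fin n))) = LatticeMod2 n ∧
      ∀ i : Fin n, ‖b i‖ = succMin n (LatticeMod2 n) (i + 1) := by
  rintro ⟨b, -, hspan, hmin⟩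
  have hb_even : ∀ i, b i ∈ evenLattice n := fun i => by
    have hb_mem : b i ∈ LatticeMod2 n := hspan ▸ Submodule.subset_span (Set.mem_range_self i)
    have hb_le : ‖b i‖ ≤ 2 := hmin i ▸ succMin_latticeMod2_le_two (by omega) (by omega)
    refine mem_evenLattice_of_norm_sq_lt hb_mem ?_
    have hn' : (5 : ℝ) ≤ n := by exact_mod_cast hn
    nlinarith [norm_nonneg (b i)]
  have hspan_le : Submodule.span ℤ (Set.range b) ≤ evenLattice n :=
    Submodule.span_le.mpr (Set.range_subset_iff.mpr hb_even)
  refine one_notMem_evenLattice (by omega) (hspan_le ?_)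
  rw [← SetLike.mem_coe, hspan]
  exact one_mem_latticeMod2 n
end

section
/- Let Λ ⊆ ℝⁿ be a lattice generated by b₁,…,bₙ with ‖bᵢ‖₂ ≤ λ for all i, and let v ∈ ℝⁿ. If min_{u∈Λ} ‖v − u‖₂ = (√n/2)·λ, then the vectors b₁,…,bₙ are mutually orthogonal, each has norm exactly λ, and v = Σᵢ (aᵢ + 1/2)bᵢ for some integers aᵢ. -/
/-!
Write `v = ∑ cᵢ bᵢ` and `tᵢ = fract cᵢ`. Rounding the coordinates one at a time, each to the
better of its two neighbouring integers, costs at most the `(1 - t, t)`-weighted mean of the two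
choices, i.e. `t (1 - t) ‖bᵢ‖²`; so some lattice point lies within squared distance
`∑ tᵢ (1 - tᵢ) ‖bᵢ‖² ≤ n λ² / 4` of `v`. Equality forces every `tᵢ = 1/2` and `‖bᵢ‖ = λ`.
For `i ≠ j`, rounding the pair first, to `(bᵢ ± bⱼ)/2` with the better sign, saves a further
`|⟪bᵢ, bⱼ⟫| / 2`, which therefore vanishes.
-/

open Finset Submodule
open scoped RealInnerProductSpace

lemma mul_one_sub_mul_sq_le (t : ℝ) {x lam : ℝ} (hx0 : 0 ≤ x) (hx : x ≤ lam) :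
    t * (1 - t) * x ^ 2 ≤ lam ^ 2 / 4 := by
  nlinarith [mul_nonneg (sq_nonneg (t - 1 / 2)) (sq_nonneg x), mul_le_mul hx hx hx0 (hx0.trans hx)]

lemma eq_half_and_eq_of_mul_one_sub_mul_sq_eq {t x lam : ℝ} (hlam : 0 < lam) (hx0 : 0 ≤ x)
    (hx : x ≤ lam) (h : t * (1 - t) * x ^ 2 = lam ^ 2 / 4) : t = 1 / 2 ∧ x = lam := by
  have hxlam : x = lam := by
    nlinarith [mul_nonneg (sq_nonneg (t - 1 / 2)) (sq_nonneg x)]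
  subst hxlam
  refine ⟨?_, rfl⟩
  have hprod : (t - 1 / 2) ^ 2 * x ^ 2 = 0 := by linarith
  have hsq : (t - 1 / 2) ^ 2 = 0 := (mul_eq_zero.1 hprod).resolve_right (by positivity)
  exact sub_eq_zero.1 (pow_eq_zero_iff two_ne_zero |>.1 hsq)

lemma sum_eq_add_add_sum_erase_erase {ι M : Type*} [Fintype ι] [DecidableEq ι]
    [AddCommMonoid M] (f : ι → M) {i j : ι} (hij : i ≠ j) :
    ∑ k, f k = f i + (f j + ∑ k ∈ (univ.erase i).erase j, f k) := by
  rw [add_sum_erase _ _ (mem_erase.2 ⟨hij.symm, mem_univ j⟩), add_sum_erase _ _ (mem_univ i)]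

section

variable {E : Type*} [NormedAddCommGroup E] [InnerProductSpace ℝ E]

lemma norm_add_smul_sq (w c : E) (r : ℝ) :
    ‖w + r • c‖ ^ 2 = ‖w‖ ^ 2 + 2 * r * ⟪w, c⟫ + r ^ 2 * ‖c‖ ^ 2 := by
  rw [norm_add_sq_real, real_inner_smul_right, norm_smul, mul_pow, Real.norm_eq_abs, sq_abs]
  ring

lemma exists_int_norm_add_sub_smul_sq_le (w c : E) {t : ℝ} (ht0 : 0 ≤ t) (ht1 : t ≤ 1) :
    ∃ δ : ℤ, ‖w + (t - δ) • c‖ ^ 2 ≤ ‖w‖ ^ 2 + t * (1 - t) * ‖c‖ ^ 2 := by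
  have hmean : (1 - t) * ‖w + (t - 0) • c‖ ^ 2 + t * ‖w + (t - 1) • c‖ ^ 2
      = ‖w‖ ^ 2 + t * (1 - t) * ‖c‖ ^ 2 := by
    rw [norm_add_smul_sq, norm_add_smul_sq]; ring
  rcases le_total (‖w + (t - 0) • c‖ ^ 2) (‖w + (t - 1) • c‖ ^ 2) with h | h
  · exact ⟨0, by push_cast; nlinarith⟩
  · exact ⟨1, by push_cast; nlinarith⟩

lemma exists_int_norm_add_half_sub_smul_sq_le (w c : E) :
    ∃ δ : ℤ, ‖w + (1 / 2 - δ : ℝ) • c‖ ^ 2 ≤ ‖w‖ ^ 2 + ‖c‖ ^ 2 / 4 - |⟪w, c⟫| := by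
  rcases le_total ⟪w, c⟫ 0 with h | h
  · refine ⟨0, ?_⟩
    push_cast; rw [norm_add_smul_sq, abs_of_nonpos h]; linarith
  · refine ⟨1, ?_⟩
    push_cast; rw [norm_add_smul_sq, abs_of_nonneg h]; linarith

variable {ι : Type*} (b : ι → E)

lemma intCast_smul_mem_span_range (k : ℤ) (i : ι) :
    (k : ℝ) • b i ∈ span ℤ (Set.range b) := by
  rw [Int.cast_smul_eq_zsmul]
  exact zsmul_mem (subset_span (Set.mem_range_self i)) k

lemma exists_mem_span_norm_add_sum_sub_sq_le {t : ι → ℝ} (ht0 : ∀ i, 0 ≤ t i)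
    (ht1 : ∀ i, t i ≤ 1) (s : Finset ι) (w : E) :
    ∃ u ∈ span ℤ (Set.range b), ‖w + ∑ i ∈ s, t i • b i - u‖ ^ 2
      ≤ ‖w‖ ^ 2 + ∑ i ∈ s, t i * (1 - t i) * ‖b i‖ ^ 2 := by
  classical
  induction s using Finset.induction_on generalizing w with
  | empty => exact ⟨0, zero_mem _, by simp⟩
  | insert j s hj ih =>
    obtain ⟨δ, hδ⟩ := exists_int_norm_add_sub_smul_sq_le w (b j) (ht0 j) (ht1 j)
    obtain ⟨u, hu, hle⟩ := ih (w + (t j - δ) • b j)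
    refine ⟨u + (δ : ℝ) • b j, add_mem hu (intCast_smul_mem_span_range b δ j), ?_⟩
    have hshift : w + ∑ i ∈ insert j s, t i • b i - (u + (δ : ℝ) • b j)
        = w + (t j - δ) • b j + ∑ i ∈ s, t i • b i - u := by
      rw [sum_insert hj]; module
    rw [hshift, sum_insert hj]
    linarith

variable {b} {v : E} {r : ℝ}

lemma le_norm_sq_add_sum_of_forall_le_norm_sub_sq
    (hr : ∀ u ∈ span ℤ (Set.range b), r ≤ ‖v - u‖ ^ 2) {t : ι → ℝ} (ht0 : ∀ i, 0 ≤ t i)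
    (ht1 : ∀ i, t i ≤ 1) {s : Finset ι} {w : E}
    (hw : v - (w + ∑ i ∈ s, t i • b i) ∈ span ℤ (Set.range b)) :
    r ≤ ‖w‖ ^ 2 + ∑ i ∈ s, t i * (1 - t i) * ‖b i‖ ^ 2 := by
  obtain ⟨u, hu, hle⟩ := exists_mem_span_norm_add_sum_sub_sq_le b ht0 ht1 s w
  calc r ≤ ‖v - (v - (w + ∑ i ∈ s, t i • b i) + u)‖ ^ 2 := hr _ (add_mem hw hu)
    _ = ‖w + ∑ i ∈ s, t i • b i - u‖ ^ 2 := by rw [sub_add, sub_sub_cancel]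
    _ ≤ _ := hle

variable [Fintype ι] {lam : ℝ}

lemma fract_eq_half_and_norm_eq_of_forall_le_norm_sub_sq
    (hr : ∀ u ∈ span ℤ (Set.range b), Fintype.card ι * lam ^ 2 / 4 ≤ ‖v - u‖ ^ 2)
    (hlam : 0 < lam) (hb : ∀ i, ‖b i‖ ≤ lam) {c : ι → ℝ} (hv : v = ∑ i, c i • b i) (i : ι) :
    Int.fract (c i) = 1 / 2 ∧ ‖b i‖ = lam := by
  have hmem : v - (0 + ∑ i, Int.fract (c i) • b i) ∈ span ℤ (Set.range b) := by
    have : v - (0 + ∑ i, Int.fract (c i) • b i) = ∑ i, (⌊c i⌋ : ℝ) • b i := by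
      rw [hv, zero_add, ← sum_sub_distrib]
      simp_rw [← sub_smul, Int.self_sub_fract]
    rw [this]
    exact sum_mem fun i _ => intCast_smul_mem_span_range b _ i
  have hlow := le_norm_sq_add_sum_of_forall_le_norm_sub_sq hr (fun i => Int.fract_nonneg _)
    (fun i => (Int.fract_lt_one _).le) hmem
  have hle : ∀ i ∈ univ, Int.fract (c i) * (1 - Int.fract (c i)) * ‖b i‖ ^ 2 ≤ lam ^ 2 / 4 :=
    fun i _ => mul_one_sub_mul_sq_le _ (norm_nonneg _) (hb i)
  have hge : ∑ _i : ι, lam ^ 2 / 4 ≤ ∑ i, Int.fract (c i) * (1 - Int.fract (c i)) * ‖b i‖ ^ 2 := by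
    rw [sum_const, card_univ, nsmul_eq_mul, ← mul_div_assoc]
    simpa using hlow
  have heq := (sum_eq_sum_iff_of_le hle).1 (le_antisymm (sum_le_sum hle) hge) i (mem_univ i)
  exact eq_half_and_eq_of_mul_one_sub_mul_sq_eq hlam (norm_nonneg _) (hb i) heq

lemma inner_eq_zero_of_forall_le_norm_sub_sq
    (hr : ∀ u ∈ span ℤ (Set.range b), ∑ k, ‖b k‖ ^ 2 / 4 ≤ ‖v - u‖ ^ 2) {a : ι → ℤ}
    (hv : v = ∑ k, ((a k : ℝ) + 1 / 2) • b k) {i j : ι} (hij : i ≠ j) : ⟪b i, b j⟫ = 0 := by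
  classical
  set s := (univ.erase i).erase j
  obtain ⟨δ, hδ⟩ := exists_int_norm_add_half_sub_smul_sq_le ((1 / 2 : ℝ) • b i) (b j)
  have hmem : v - ((1 / 2 : ℝ) • b i + (1 / 2 - δ : ℝ) • b j + ∑ k ∈ s, (1 / 2 : ℝ) • b k)
      ∈ span ℤ (Set.range b) := by
    have hv' : v = ∑ k, (a k : ℝ) • b k + ∑ k, (1 / 2 : ℝ) • b k := by
      rw [hv, ← sum_add_distrib]; simp_rw [add_smul]
    rw [hv', sum_eq_add_add_sum_erase_erase (fun k => (1 / 2 : ℝ) • b k) hij]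
    convert add_mem (sum_mem fun k _ => intCast_smul_mem_span_range b (a k) k)
      (intCast_smul_mem_span_range b δ j) using 1
    module
  have hlow := le_norm_sq_add_sum_of_forall_le_norm_sub_sq hr (t := fun _ => 1 / 2)
    (fun _ => by norm_num) (fun _ => by norm_num) hmem
  have hquarter : ∑ k ∈ s, (1 / 2 : ℝ) * (1 - 1 / 2) * ‖b k‖ ^ 2 = ∑ k ∈ s, ‖b k‖ ^ 2 / 4 :=
    sum_congr rfl fun _ _ => by ring
  have hhalf : ‖(1 / 2 : ℝ) • b i‖ ^ 2 = ‖b i‖ ^ 2 / 4 := by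
    rw [norm_smul, mul_pow, Real.norm_of_nonneg (by norm_num)]; ring
  have hinner : |⟪(1 / 2 : ℝ) • b i, b j⟫| = |⟪b i, b j⟫| / 2 := by
    rw [real_inner_smul_left, abs_mul, abs_of_pos (by norm_num : (0 : ℝ) < 1 / 2)]; ring
  rw [sum_eq_add_add_sum_erase_erase _ hij, hquarter] at hlow
  rw [hhalf, hinner] at hδ
  exact abs_nonpos_iff.1 (by linarith)

end

/-- Equality case of the covering radius bound: if the distance from v to the lattice
equals (√n/2)·λ, then the generators are mutually orthogonal of norm λ and v is a deep
hole Σ (aᵢ + 1/2) bᵢ. -/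
theorem stmt_8 (n : ℕ) (b : Fin n → EuclideanSpace ℝ (Fin n))
    (hli : LinearIndependent ℝ b) (lam : ℝ) (hlam : 0 < lam)
    (hb : ∀ i, ‖b i‖ ≤ lam) (v : EuclideanSpace ℝ (Fin n))
    (hmin : IsLeast {d : ℝ | ∃ u ∈ Submodule.span ℤ (Set.range b), ‖v - u‖ = d}
      (Real.sqrt n / 2 * lam)) :
    (∀ i j, i ≠ j → (inner ℝ (b i) (b j) : ℝ) = 0) ∧
    (∀ i, ‖b i‖ = lam) ∧
    ∃ a : Fin n → ℤ, v = ∑ i, ((a i : ℝ) + 1 / 2) • b i := by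
  have hr : ∀ u ∈ span ℤ (Set.range b), Fintype.card (Fin n) * lam ^ 2 / 4 ≤ ‖v - u‖ ^ 2 := by
    intro u hu
    have hsq : (Real.sqrt n / 2 * lam) ^ 2 = n * lam ^ 2 / 4 := by
      rw [mul_pow, div_pow, Real.sq_sqrt n.cast_nonneg]; ring
    simpa [hsq] using pow_le_pow_left₀ (by positivity) (hmin.2 ⟨u, hu, rfl⟩) 2
  obtain ⟨c, hc⟩ : ∃ c : Fin n → ℝ, ∑ i, c i • b i = v := by
    rw [← mem_span_range_iff_exists_fun, hli.span_eq_top_of_card_eq_finrank' (by simp)]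
    exact mem_top
  have hcoef := fract_eq_half_and_norm_eq_of_forall_le_norm_sub_sq hr hlam hb hc.symm
  have hnorm (i : Fin n) : ‖b i‖ = lam := (hcoef i).2
  have hv : v = ∑ i, ((⌊c i⌋ : ℝ) + 1 / 2) • b i := by
    rw [← hc]
    refine sum_congr rfl fun i _ => ?_
    rw [← (hcoef i).1, Int.floor_add_fract]
  refine ⟨fun i j hij => inner_eq_zero_of_forall_le_norm_sub_sq (fun u hu => ?_) hv hij,
    hnorm, _, hv⟩
  simpa [hnorm, mul_div_assoc] using hr u hu
end

section
/- Every full-rank lattice in ℝ² with the Euclidean norm is standard: it has a ℤ-basis b₁, b₂ with ‖b₁‖₂ = λ₁ and ‖b₂‖₂ = λ₂. -/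
/-! Let `c₁` be a shortest nonzero lattice vector and `c₂` a shortest lattice vector off the line
`ℝ c₁`; their norms are `λ₁` and `λ₂`. They generate the lattice: reducing a lattice vector modulo
`ℤ c₁ + ℤ c₂` leaves `a • c₁ + t • c₂` with `|a|, |t| ≤ 1/2`. By strict convexity of the norm this
is strictly shorter than `c₂` unless `t = 0`, so it lies on `ℝ c₁`, and being at most half as long
as `c₁` it is `0`. -/

open Submodule Metric Module

section LinearAlgebra

variable {K V : Type*} [Field K] [AddCommGroup V] [Module K V]

theorem linearIndependent_pair_of_notMem_span_singleton {c x : V} (hc : c ≠ 0)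
    (hx : x ∉ K ∙ c) : LinearIndependent K ![c, x] :=
  (LinearIndependent.pair_iff' hc).2 fun a hax => hx (mem_span_singleton.2 ⟨a, hax⟩)

theorem finrank_span_le_one_of_subset_span_singleton {S : Set V} {c : V}
    (hS : S ⊆ K ∙ c) : finrank K (span K S) ≤ 1 :=
  calc finrank K (span K S) ≤ finrank K (K ∙ c) := Submodule.finrank_mono (span_le.2 hS)
    _ ≤ 1 := by simpa using finrank_span_le_card ({c} : Set V)

theorem two_le_finrank_span_of_notMem_span_singleton [FiniteDimensional K V] {S : Set V}
    {c x : V} (hcS : c ∈ S) (hxS : x ∈ S) (hc : c ≠ 0) (hx : x ∉ K ∙ c) :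
    2 ≤ finrank K (span K S) :=
  calc 2 = finrank K (span K (Set.range ![c, x])) := by
        rw [finrank_span_eq_card (linearIndependent_pair_of_notMem_span_singleton hc hx)]; simp
    _ ≤ finrank K (span K S) := by
        refine Set.finrank_mono ?_
        rw [Matrix.range_cons_cons_empty]
        exact Set.insert_subset hcS (Set.singleton_subset_iff.2 hxS)

theorem LinearIndependent.exists_notMem_span_singleton {ι : Type*} [Fintype ι] {b : ι → V}
    (hb : LinearIndependent K b) (hι : 1 < Fintype.card ι) (c : V) : ∃ i, b i ∉ K ∙ c := by
  by_contra! h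
  have := finrank_span_le_one_of_subset_span_singleton (Set.range_subset_iff.2 h)
  rw [finrank_span_eq_card hb] at this
  omega

end LinearAlgebra

section ShortestVectors

variable {E : Type*} [NormedAddCommGroup E]

theorem Submodule.finite_inter_closedBall [ProperSpace E] (L : Submodule ℤ E)
    [DiscreteTopology L] (R : ℝ) : ((L : Set E) ∩ closedBall 0 R).Finite := by
  have : DiscreteTopology L.toAddSubgroup := ‹DiscreteTopology L›
  rw [Set.inter_comm]
  exact finite_isBounded_inter_isClosed DiscreteTopology.isDiscrete isBounded_closedBall
    (AddSubgroup.isClosed_of_discrete (H := L.toAddSubgroup))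

theorem Submodule.exists_forall_notMem_norm_le [ProperSpace E] (L : Submodule ℤ E)
    [DiscreteTopology L] (S : Set E) {v : E} (hv : v ∈ L) (hvS : v ∉ S) :
    ∃ c ∈ L, c ∉ S ∧ ∀ x ∈ L, x ∉ S → ‖c‖ ≤ ‖x‖ := by
  obtain ⟨c, ⟨⟨hcL, hcv⟩, hcS⟩, hmin⟩ := Set.exists_min_image
    (((L : Set E) ∩ closedBall 0 ‖v‖) \ S) norm
    ((L.finite_inter_closedBall ‖v‖).subset Set.sdiff_subset) ⟨v, ⟨hv, by simp⟩, hvS⟩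
  refine ⟨c, hcL, hcS, fun x hxL hxS => ?_⟩
  rcases le_total ‖x‖ ‖v‖ with hxv | hvx
  · exact hmin x ⟨⟨hxL, by simpa using hxv⟩, hxS⟩
  · exact (mem_closedBall_zero_iff.1 hcv).trans hvx

variable [NormedSpace ℝ E] [StrictConvexSpace ℝ E]

theorem norm_smul_add_smul_lt {c₁ c₂ : E} (h12 : ‖c₁‖ ≤ ‖c₂‖) (hc₂ : c₂ ∉ ℝ ∙ c₁) {a t : ℝ}
    (ha : |a| ≤ 1 / 2) (ht : |t| ≤ 1 / 2) (ht0 : t ≠ 0) : ‖a • c₁ + t • c₂‖ < ‖c₂‖ := by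
  have hc₂0 : c₂ ≠ 0 := fun h => hc₂ (h ▸ zero_mem _)
  have hc₂pos : 0 < ‖c₂‖ := norm_pos_iff.2 hc₂0
  have hsum : ‖a • c₁‖ + ‖t • c₂‖ ≤ ‖c₂‖ := by
    rw [norm_smul, norm_smul, Real.norm_eq_abs, Real.norm_eq_abs]
    nlinarith [abs_nonneg a, abs_nonneg t, norm_nonneg c₁]
  by_cases hac : a • c₁ = 0
  · rw [hac, zero_add, norm_smul, Real.norm_eq_abs]
    nlinarith
  have hray : ¬SameRay ℝ (a • c₁) (t • c₂) := by
    intro hray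
    obtain ⟨r, -, hr⟩ := hray.exists_nonneg_left hac
    refine hc₂ (mem_span_singleton.2 ⟨t⁻¹ * (r * a), ?_⟩)
    rw [mul_smul, mul_smul, hr, inv_smul_smul₀ ht0]
  calc ‖a • c₁ + t • c₂‖ < ‖a • c₁‖ + ‖t • c₂‖ := norm_add_lt_of_not_sameRay hray
    _ ≤ ‖c₂‖ := hsum

variable (L : Submodule ℤ E) {c₁ c₂ : E}

theorem Submodule.smul_add_smul_eq_zero_of_abs_le_half
    (hmin₁ : ∀ x ∈ L, x ≠ 0 → ‖c₁‖ ≤ ‖x‖) (hc₂L : c₂ ∈ L) (hc₂ : c₂ ∉ ℝ ∙ c₁)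
    (hmin₂ : ∀ x ∈ L, x ∉ ℝ ∙ c₁ → ‖c₂‖ ≤ ‖x‖) {a t : ℝ} (ha : |a| ≤ 1 / 2) (ht : |t| ≤ 1 / 2)
    (hy : a • c₁ + t • c₂ ∈ L) : a • c₁ + t • c₂ = 0 := by
  have h12 : ‖c₁‖ ≤ ‖c₂‖ := hmin₁ c₂ hc₂L fun h => hc₂ (h ▸ zero_mem _)
  obtain rfl : t = 0 := by
    by_contra ht0
    have hy' : a • c₁ + t • c₂ ∉ ℝ ∙ c₁ := fun h => hc₂ <| (smul_mem_iff _ ht0).1 <| by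
      simpa using sub_mem h (smul_mem _ a (mem_span_singleton_self c₁))
    exact (hmin₂ _ hy hy').not_gt (norm_smul_add_smul_lt h12 hc₂ ha ht ht0)
  rw [zero_smul, add_zero] at hy ⊢
  by_contra hy0
  have hle := hmin₁ _ hy hy0
  rw [norm_smul, Real.norm_eq_abs] at hle
  have hc₁ : ‖c₁‖ = 0 := by nlinarith [norm_nonneg c₁, abs_nonneg a]
  exact hy0 (by rw [norm_eq_zero.1 hc₁, smul_zero])

theorem Submodule.mem_span_int_pair_of_mem_span_real_pair (hc₁L : c₁ ∈ L)
    (hmin₁ : ∀ x ∈ L, x ≠ 0 → ‖c₁‖ ≤ ‖x‖) (hc₂L : c₂ ∈ L) (hc₂ : c₂ ∉ ℝ ∙ c₁)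
    (hmin₂ : ∀ x ∈ L, x ∉ ℝ ∙ c₁ → ‖c₂‖ ≤ ‖x‖) {x : E} (hxL : x ∈ L)
    (hx : x ∈ span ℝ {c₁, c₂}) : x ∈ span ℤ {c₁, c₂} := by
  obtain ⟨a, t, rfl⟩ := mem_span_pair.1 hx
  have hsplit : a • c₁ + t • c₂ = (round a • c₁ + round t • c₂) +
      ((a - round a) • c₁ + (t - round t) • c₂) := by
    rw [← Int.cast_smul_eq_zsmul ℝ, ← Int.cast_smul_eq_zsmul ℝ]
    module
  have hfrac : (a - round a) • c₁ + (t - round t) • c₂ ∈ L := by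
    rw [← add_sub_cancel_left (round a • c₁ + round t • c₂)
      ((a - round a) • c₁ + (t - round t) • c₂), ← hsplit]
    exact sub_mem hxL (add_mem (zsmul_mem hc₁L _) (zsmul_mem hc₂L _))
  rw [hsplit, L.smul_add_smul_eq_zero_of_abs_le_half hmin₁ hc₂L hc₂ hmin₂ (abs_sub_round a)
    (abs_sub_round t) hfrac, add_zero]
  exact mem_span_pair.2 ⟨round a, round t, rfl⟩

end ShortestVectors

section SuccessiveMinima

variable {n : ℕ} (Λ : Set (EuclideanSpace ℝ (Fin n)))

theorem succMin_eq_of_forall_le_finrank_iff {i : ℕ} {ρ : ℝ}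
    (h : ∀ r, i ≤ finrank ℝ (span ℝ (Λ ∩ closedBall 0 r)) ↔ ρ ≤ r) : succMin n Λ i = ρ := by
  rw [succMin, show {r : ℝ | i ≤ finrank ℝ (span ℝ (Λ ∩ closedBall 0 r))} = Set.Ici ρ from
    Set.ext h, csInf_Ici]

theorem succMin_one_eq_norm {c₁ : EuclideanSpace ℝ (Fin n)} (hc₁Λ : c₁ ∈ Λ) (hc₁0 : c₁ ≠ 0)
    (hmin₁ : ∀ x ∈ Λ, x ≠ 0 → ‖c₁‖ ≤ ‖x‖) : succMin n Λ 1 = ‖c₁‖ := by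
  refine succMin_eq_of_forall_le_finrank_iff Λ fun r => ?_
  rw [Nat.one_le_iff_ne_zero, Ne, Submodule.finrank_eq_zero, span_eq_bot]
  push Not
  constructor
  · rintro ⟨x, ⟨hxΛ, hxr⟩, hx0⟩
    exact (hmin₁ x hxΛ hx0).trans (mem_closedBall_zero_iff.1 hxr)
  · exact fun hr => ⟨c₁, ⟨hc₁Λ, mem_closedBall_zero_iff.2 hr⟩, hc₁0⟩

theorem succMin_two_eq_norm {c₁ c₂ : EuclideanSpace ℝ (Fin n)} (hc₁Λ : c₁ ∈ Λ) (hc₁0 : c₁ ≠ 0)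
    (hc₂Λ : c₂ ∈ Λ) (h12 : ‖c₁‖ ≤ ‖c₂‖) (hc₂ : c₂ ∉ ℝ ∙ c₁)
    (hmin₂ : ∀ x ∈ Λ, x ∉ ℝ ∙ c₁ → ‖c₂‖ ≤ ‖x‖) : succMin n Λ 2 = ‖c₂‖ := by
  refine succMin_eq_of_forall_le_finrank_iff Λ fun r => ⟨fun h => ?_, fun hr => ?_⟩
  · by_contra! hr
    refine absurd (h.trans (finrank_span_le_one_of_subset_span_singleton (c := c₁) ?_)) (by omega)
    rintro x ⟨hxΛ, hxr⟩
    by_contra hx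
    exact (hmin₂ x hxΛ hx).not_gt ((mem_closedBall_zero_iff.1 hxr).trans_lt hr)
  · exact two_le_finrank_span_of_notMem_span_singleton
      ⟨hc₁Λ, mem_closedBall_zero_iff.2 (h12.trans hr)⟩ ⟨hc₂Λ, mem_closedBall_zero_iff.2 hr⟩ hc₁0 hc₂

end SuccessiveMinima

/-- Every full-rank lattice in ℝ² is standard: some ℤ-basis achieves the successive minima. -/
theorem stmt_9 (b : Fin 2 → EuclideanSpace ℝ (Fin 2)) (hli : LinearIndependent ℝ b) :
    ∃ c : Fin 2 → EuclideanSpace ℝ (Fin 2),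
      LinearIndependent ℝ c ∧
      Submodule.span ℤ (Set.range c) = Submodule.span ℤ (Set.range b) ∧
      ∀ i : Fin 2, ‖c i‖ =
        succMin 2 ((Submodule.span ℤ (Set.range b) :
          Submodule ℤ (EuclideanSpace ℝ (Fin 2))) : Set _) (i + 1) := by
  have : DiscreteTopology (span ℤ (Set.range b)) := by
    rw [← coe_basisOfLinearIndependentOfCardEqFinrank hli (by simp)]
    infer_instance
  set L : Submodule ℤ (EuclideanSpace ℝ (Fin 2)) := span ℤ (Set.range b)
  obtain ⟨c₁, hc₁L, hc₁0, hmin₁⟩ := L.exists_forall_notMem_norm_le {0} (subset_span ⟨0, rfl⟩)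
    (hli.ne_zero 0)
  obtain ⟨i, hi⟩ := hli.exists_notMem_span_singleton (by simp) c₁
  obtain ⟨c₂, hc₂L, hc₂, hmin₂⟩ := L.exists_forall_notMem_norm_le (ℝ ∙ c₁) (subset_span ⟨i, rfl⟩) hi
  have h12 : ‖c₁‖ ≤ ‖c₂‖ := hmin₁ c₂ hc₂L fun h => hc₂ (h ▸ zero_mem _)
  have hind := linearIndependent_pair_of_notMem_span_singleton hc₁0 hc₂
  have hspan : span ℝ {c₁, c₂} = ⊤ := by
    rw [← Matrix.range_cons_cons_empty c₁ c₂ ![]]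
    exact hind.span_eq_top_of_card_eq_finrank (by simp)
  refine ⟨![c₁, c₂], hind, ?_, fun i => ?_⟩
  · rw [Matrix.range_cons_cons_empty]
    refine le_antisymm (span_le.2 (Set.insert_subset hc₁L (Set.singleton_subset_iff.2 hc₂L)))
      fun x hx => ?_
    exact L.mem_span_int_pair_of_mem_span_real_pair hc₁L hmin₁ hc₂L hc₂ hmin₂ hx (hspan ▸ mem_top)
  · fin_cases i
    · exact (succMin_one_eq_norm _ hc₁L hc₁0 hmin₁).symm
    · exact (succMin_two_eq_norm _ hc₁L hc₁0 hc₂L h12 hc₂ hmin₂).symm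
end

section
/- For n = 4: if b₁, b₂, b₃, b₄ are mutually orthogonal vectors in ℝ⁴ of equal Euclidean norm λ > 0, then the lattice Λ generated by b₁, b₂, b₃, and c = (b₁+b₂+b₃+b₄)/2 has successive minima λ₁ = λ₂ = λ₃ = λ₄ = λ, and the basis b₁, b₂, b₃, c achieves the successive minima (note ‖c‖₂ = λ). -/
/-!
In the orthogonal frame `b`, a vector of `Λ = span ℤ {b₀, b₁, b₂, c}` is `∑ (kᵢ / 2) • bᵢ` with
integers `kᵢ` all of the same parity, so `‖x‖² = λ² ∑ kᵢ² / 4 ≥ λ²` unless `x = 0`: either all `kᵢ`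
are odd, or they are even and one of them is at least `2` in absolute value. Conversely
`b₀, b₁, b₂, c` have norm `λ` and span `ℝ⁴`, since `b₃ = 2c - b₀ - b₁ - b₂`. Hence all four
successive minima equal `λ`.
-/

theorem succMin_eq_of_forall_le_norm {n : ℕ} {Λ : Set (EuclideanSpace ℝ (Fin n))} {lam : ℝ}
    {i : ℕ} (hi : 1 ≤ i) (hmin : ∀ x ∈ Λ, x ≠ 0 → lam ≤ ‖x‖)
    (hrank : i ≤ Module.finrank ℝ (Submodule.span ℝ (Λ ∩ Metric.closedBall 0 lam))) :
    succMin n Λ i = lam := by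
  suffices {r : ℝ | i ≤ Module.finrank ℝ (Submodule.span ℝ (Λ ∩ Metric.closedBall 0 r))} =
      Set.Ici lam by
    rw [succMin, this, csInf_Ici]
  ext r
  simp only [Set.mem_ofPred_eq, Set.mem_Ici]
  refine ⟨fun hr => ?_, fun hr => hrank.trans (Submodule.finrank_mono (Submodule.span_mono ?_))⟩
  · by_contra! hlt
    have hsub : Λ ∩ Metric.closedBall 0 r ⊆ {0} := by
      rintro x ⟨hxΛ, hxr⟩
      by_contra hx0
      have := hmin x hxΛ hx0
      rw [mem_closedBall_zero_iff] at hxr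
      linarith
    have hbot := Submodule.span_mono (R := ℝ) hsub
    rw [Submodule.span_singleton_eq_bot.mpr rfl, le_bot_iff] at hbot
    rw [hbot, finrank_bot] at hr
    omega
  · exact Set.inter_subset_inter_right _ (Metric.closedBall_subset_closedBall hr)

section Orthogonal

variable {E ι : Type*} [NormedAddCommGroup E] [InnerProductSpace ℝ E] [Fintype ι]
  {b : ι → E} {lam : ℝ}

open Finset in
theorem norm_sum_smul_sq_of_orthogonal (horth : Pairwise fun i j => inner ℝ (b i) (b j) = 0)
    (hnorm : ∀ i, ‖b i‖ = lam) (q : ι → ℝ) :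
    ‖∑ i, q i • b i‖ ^ 2 = (∑ i, q i ^ 2) * lam ^ 2 := by
  rw [← real_inner_self_eq_norm_sq, sum_inner, sum_mul]
  refine sum_congr rfl fun i _ => ?_
  rw [inner_sum, sum_eq_single i (fun j _ hji => by
    rw [real_inner_smul_left, real_inner_smul_right, horth hji.symm, mul_zero, mul_zero])
    (by simp)]
  rw [real_inner_smul_left, real_inner_smul_right, real_inner_self_eq_norm_sq, hnorm]
  ring

end Orthogonal

/-- `2m₀ + m₃, 2m₁ + m₃, 2m₂ + m₃, m₃` are twice the coordinates of `m₀b₀ + m₁b₁ + m₂b₂ + m₃c`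
in the frame `b`. -/
theorem four_le_sum_sq_of_ne_zero {m0 m1 m2 m3 : ℤ} (h : ¬(m0 = 0 ∧ m1 = 0 ∧ m2 = 0 ∧ m3 = 0)) :
    4 ≤ (2 * m0 + m3) ^ 2 + (2 * m1 + m3) ^ 2 + (2 * m2 + m3) ^ 2 + m3 ^ 2 := by
  have one_le_sq : ∀ {n : ℤ}, n ≠ 0 → 1 ≤ n ^ 2 := fun hn =>
    (one_le_sq_iff_one_le_abs _).2 (Int.one_le_abs hn)
  rcases Int.even_or_odd m3 with ⟨t, rfl⟩ | ⟨t, rfl⟩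
  · have hsum : (2 * m0 + (t + t)) ^ 2 + (2 * m1 + (t + t)) ^ 2 + (2 * m2 + (t + t)) ^ 2
        + (t + t) ^ 2 = 4 * ((m0 + t) ^ 2 + (m1 + t) ^ 2 + (m2 + t) ^ 2 + t ^ 2) := by ring
    have hpos : 1 ≤ (m0 + t) ^ 2 + (m1 + t) ^ 2 + (m2 + t) ^ 2 + t ^ 2 := by
      have := sq_nonneg (m0 + t); have := sq_nonneg (m1 + t)
      have := sq_nonneg (m2 + t); have := sq_nonneg t
      rcases (by omega : m0 + t ≠ 0 ∨ m1 + t ≠ 0 ∨ m2 + t ≠ 0 ∨ t ≠ 0) with h | h | h | h <;>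
        linarith [one_le_sq h]
    omega
  · linarith [one_le_sq (show 2 * m0 + (2 * t + 1) ≠ 0 by omega),
      one_le_sq (show 2 * m1 + (2 * t + 1) ≠ 0 by omega),
      one_le_sq (show 2 * m2 + (2 * t + 1) ≠ 0 by omega), one_le_sq (show 2 * t + 1 ≠ 0 by omega)]

section HalfSum

variable {E : Type*} [NormedAddCommGroup E] [InnerProductSpace ℝ E] {b : Fin 4 → E} {lam : ℝ}
  {c : E}

theorem norm_halfSum (horth : Pairwise fun i j => inner ℝ (b i) (b j) = 0)
    (hnorm : ∀ i, ‖b i‖ = lam) : ‖(2 : ℝ)⁻¹ • (b 0 + b 1 + b 2 + b 3)‖ = lam := by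
  have h := norm_sum_smul_sq_of_orthogonal horth hnorm fun _ => 2⁻¹
  simp only [Fin.sum_univ_four, ← smul_add] at h
  rw [← pow_left_inj₀ (norm_nonneg _) (hnorm 0 ▸ norm_nonneg _) two_ne_zero, h]
  norm_num

theorem le_norm_of_mem_span_halfSum (horth : Pairwise fun i j => inner ℝ (b i) (b j) = 0)
    (hnorm : ∀ i, ‖b i‖ = lam) (hc : c = (2 : ℝ)⁻¹ • (b 0 + b 1 + b 2 + b 3)) {x : E}
    (hx : x ∈ Submodule.span ℤ ({b 0, b 1, b 2, c} : Set E)) (hx0 : x ≠ 0) : lam ≤ ‖x‖ := by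
  rw [show ({b 0, b 1, b 2, c} : Set E) = Set.range ![b 0, b 1, b 2, c] by
    simp only [Matrix.range_cons, Matrix.range_empty, Set.union_empty, Set.singleton_union],
    Submodule.mem_span_range_iff_exists_fun] at hx
  obtain ⟨m, rfl⟩ := hx
  set k : Fin 4 → ℤ := ![2 * m 0 + m 3, 2 * m 1 + m 3, 2 * m 2 + m 3, m 3] with hk
  have hx : ∑ i, m i • ![b 0, b 1, b 2, c] i = ∑ i, ((k i : ℝ) / 2) • b i := by
    simp [Fin.sum_univ_four, hk, hc, ← Int.cast_smul_eq_zsmul ℝ]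
    module
  have hm : ¬(m 0 = 0 ∧ m 1 = 0 ∧ m 2 = 0 ∧ m 3 = 0) := by
    rintro ⟨h0, h1, h2, h3⟩
    simp [Fin.sum_univ_four, h0, h1, h2, h3] at hx0
  have hk4 : (4 : ℝ) ≤ ∑ i, (k i : ℝ) ^ 2 := by
    simpa [Fin.sum_univ_four, hk] using (Int.cast_le (R := ℝ)).2 (four_le_sum_sq_of_ne_zero hm)
  rw [hx, ← pow_le_pow_iff_left₀ (hnorm 0 ▸ norm_nonneg _) (norm_nonneg _) two_ne_zero,
    norm_sum_smul_sq_of_orthogonal horth hnorm]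
  simp_rw [div_pow, ← Finset.sum_div]
  exact le_mul_of_one_le_left (sq_nonneg _) (by rw [le_div_iff₀ (by norm_num)]; linarith)

theorem four_le_finrank_span_of_halfSum_mem [FiniteDimensional ℝ E] (hlam : lam ≠ 0)
    (horth : Pairwise fun i j => inner ℝ (b i) (b j) = 0)
    (hnorm : ∀ i, ‖b i‖ = lam) (hc : c = (2 : ℝ)⁻¹ • (b 0 + b 1 + b 2 + b 3)) {S : Set E}
    (hS : {b 0, b 1, b 2, c} ⊆ S) : 4 ≤ Module.finrank ℝ (Submodule.span ℝ S) := by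
  have hb : LinearIndependent ℝ b := linearIndependent_of_ne_zero_of_inner_eq_zero
    (fun i => norm_ne_zero_iff.1 ((hnorm i).trans_ne hlam)) horth
  have hmem : ∀ v ∈ ({b 0, b 1, b 2, c} : Set E), v ∈ Submodule.span ℝ S := fun v hv =>
    Submodule.subset_span (hS hv)
  have hrange : Set.range b ⊆ Submodule.span ℝ S := by
    rintro _ ⟨i, rfl⟩
    fin_cases i
    · exact hmem _ (by simp)
    · exact hmem _ (by simp)
    · exact hmem _ (by simp)
    · have h3 : b 3 = (2 : ℝ) • c - b 0 - b 1 - b 2 := by rw [hc]; module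
      rw [show b ⟨3, _⟩ = b 3 from rfl, h3]
      exact Submodule.sub_mem _ (Submodule.sub_mem _ (Submodule.sub_mem _
        (Submodule.smul_mem _ _ (hmem _ (by simp))) (hmem _ (by simp))) (hmem _ (by simp)))
        (hmem _ (by simp))
  calc 4 = Module.finrank ℝ (Submodule.span ℝ (Set.range b)) := by
        rw [finrank_span_eq_card hb, Fintype.card_fin]
    _ ≤ _ := Submodule.finrank_mono (Submodule.span_le.2 hrange)

end HalfSum

/-- If b₁,b₂,b₃,b₄ are mutually orthogonal of norm λ > 0 in ℝ⁴ and
c = (b₁+b₂+b₃+b₄)/2, then the lattice generated by b₁,b₂,b₃,c has all four successive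
minima equal to λ, ‖c‖ = λ, and the basis b₁,b₂,b₃,c achieves the successive minima. -/
theorem stmt_15 (b : Fin 4 → EuclideanSpace ℝ (Fin 4)) (lam : ℝ) (hlam : 0 < lam)
    (horth : ∀ i j, i ≠ j → (inner ℝ (b i) (b j) : ℝ) = 0)
    (hnorm : ∀ i, ‖b i‖ = lam)
    (c : EuclideanSpace ℝ (Fin 4)) (hc : c = (2 : ℝ)⁻¹ • (b 0 + b 1 + b 2 + b 3)) :
    ‖c‖ = lam ∧
    (∀ i : Fin 4, succMin 4
      ((Submodule.span ℤ ({b 0, b 1, b 2, c} : Set (EuclideanSpace ℝ (Fin 4))) :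
        Submodule ℤ (EuclideanSpace ℝ (Fin 4))) : Set _) (i + 1) = lam) ∧
    (∀ i : Fin 4, ‖(![b 0, b 1, b 2, c]) i‖ = succMin 4
      ((Submodule.span ℤ ({b 0, b 1, b 2, c} : Set (EuclideanSpace ℝ (Fin 4))) :
        Submodule ℤ (EuclideanSpace ℝ (Fin 4))) : Set _) (i + 1)) := by
  have hcnorm : ‖c‖ = lam := hc ▸ norm_halfSum horth hnorm
  have hgen : ∀ v ∈ ({b 0, b 1, b 2, c} : Set (EuclideanSpace ℝ (Fin 4))), ‖v‖ = lam := by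
    simp [hnorm, hcnorm]
  have hmin : ∀ i : Fin 4, succMin 4
      (Submodule.span ℤ ({b 0, b 1, b 2, c} : Set (EuclideanSpace ℝ (Fin 4)))) (i + 1) = lam :=
    fun i => succMin_eq_of_forall_le_norm (by omega)
      (fun _ hx hx0 => le_norm_of_mem_span_halfSum horth hnorm hc hx hx0)
      ((by omega : (i : ℕ) + 1 ≤ 4).trans (four_le_finrank_span_of_halfSum_mem hlam.ne' horth
        hnorm hc fun v hv => ⟨Submodule.subset_span hv, mem_closedBall_zero_iff.2 (hgen v hv).le⟩))
  refine ⟨hcnorm, hmin, fun i => ?_⟩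
  rw [hmin, hgen _ (by fin_cases i <;> simp)]
end

section
/- Let ‖·‖ be an arbitrary norm on ℝ², Λ ⊆ ℝ² a full-rank lattice, b₁ ∈ Λ a nonzero vector of minimal norm, and b₂ ∈ Λ such that (b₁, b₂) is a ℤ-basis of Λ and ‖b₂‖ is minimal among all u with (b₁, u) a ℤ-basis of Λ. Then ‖b₁‖ = λ₁ and ‖b₂‖ = λ₂, where λ₁, λ₂ are the successive minima of Λ with respect to ‖·‖. In particular, every lattice in ℝ² with an arbitrary norm is standard. -/
/-- The i-th successive minimum of a subset Λ of a normed space (arbitrary norm). -/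
noncomputable def succMinE {E : Type*} [NormedAddCommGroup E] [NormedSpace ℝ E]
    (Λ : Set E) (i : ℕ) : ℝ :=
  sInf {r : ℝ | i ≤ Module.finrank ℝ (Submodule.span ℝ (Λ ∩ Metric.closedBall 0 r))}

/-!
Every lattice vector `v = m • b₁ + n • b₂` with `n ≠ 0` is at least as long as `b₂`: dividing
`m` by `n` with remainder `m = n q + r`, `0 ≤ r < n`, gives `n • (q • b₁ + b₂) = v - r • b₁`,
so `n ‖w‖ ≤ ‖v‖ + r ‖b₁‖ ≤ ‖v‖ + (n - 1) ‖w‖` for `w = q • b₁ + b₂`, a vector completing `b₁` to a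
basis and hence longer than `b₂`. Thus `b₁` realises `λ₁` and `b₂`, the shortest lattice vector off
the line `ℝ b₁`, realises `λ₂`.
-/

open Module Submodule Metric

namespace Submodule

theorem span_pair_smul_add_right {R M : Type*} [CommRing R] [AddCommGroup M] [Module R M]
    (x y : M) (c : R) : span R {x, c • x + y} = span R {x, y} := by
  refine le_antisymm (span_le.2 ?_) (span_le.2 ?_) <;>
    simp only [Set.insert_subset_iff, Set.singleton_subset_iff, SetLike.mem_coe, mem_span_pair]
  · exact ⟨⟨1, 0, by simp⟩, c, 1, by simp⟩
  · exact ⟨⟨1, 0, by simp⟩, -c, 1, by module⟩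

theorem exists_mem_notMem_of_finrank_lt {R M : Type*} [Ring R] [StrongRankCondition R]
    [AddCommGroup M] [Module R M] {s : Set M} {p : Submodule R M} [Module.Finite R p]
    (h : finrank R p < finrank R (span R s)) : ∃ x ∈ s, x ∉ p := by
  by_contra! hs
  exact (finrank_mono (span_le.2 hs)).not_gt h

end Submodule

section SuccessiveMinima

variable {E : Type*} [NormedAddCommGroup E] [NormedSpace ℝ E] {Λ : Set E}

theorem card_le_finrank_span_inter_closedBall [FiniteDimensional ℝ E] {ι : Type*} [Fintype ι]
    {v : ι → E} (hv : LinearIndependent ℝ v) (hvΛ : ∀ i, v i ∈ Λ) {r : ℝ}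
    (hvr : ∀ i, ‖v i‖ ≤ r) : Fintype.card ι ≤ finrank ℝ (span ℝ (Λ ∩ closedBall 0 r)) :=
  finrank_span_eq_card hv ▸ finrank_mono (span_mono (Set.range_subset_iff.2 fun i =>
    ⟨hvΛ i, mem_closedBall_zero_iff.2 (hvr i)⟩))

theorem succMinE_one_eq_norm [FiniteDimensional ℝ E] {a : E} (ha : a ∈ Λ) (ha0 : a ≠ 0)
    (hmin : ∀ x ∈ Λ, x ≠ 0 → ‖a‖ ≤ ‖x‖) : succMinE Λ 1 = ‖a‖ := by
  refine IsLeast.csInf_eq ⟨?_, fun r hr => ?_⟩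
  · simpa using card_le_finrank_span_inter_closedBall (v := ![a])
      (linearIndependent_unique_iff.2 ha0) (by simpa) (by simp)
  · obtain ⟨x, ⟨hxΛ, hxr⟩, hx0⟩ :=
      exists_mem_notMem_of_finrank_lt (p := (⊥ : Submodule ℝ E)) (by rwa [finrank_bot])
    exact (hmin x hxΛ hx0).trans (mem_closedBall_zero_iff.1 hxr)

theorem succMinE_two_eq_norm [FiniteDimensional ℝ E] {a b : E} (ha : a ∈ Λ) (hb : b ∈ Λ)
    (hab : LinearIndependent ℝ ![a, b]) (hle : ‖a‖ ≤ ‖b‖)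
    (hmin : ∀ x ∈ Λ, x ∉ ℝ ∙ a → ‖b‖ ≤ ‖x‖) : succMinE Λ 2 = ‖b‖ := by
  refine IsLeast.csInf_eq ⟨?_, fun r hr => ?_⟩
  · simpa using card_le_finrank_span_inter_closedBall hab
      (by simpa [Fin.forall_fin_two] using ⟨ha, hb⟩) (by simpa [Fin.forall_fin_two])
  · have hlt : finrank ℝ (ℝ ∙ a) < finrank ℝ (span ℝ (Λ ∩ closedBall 0 r)) := by
      rwa [finrank_span_singleton (by simpa using hab.ne_zero 0)]
    obtain ⟨x, ⟨hxΛ, hxr⟩, hxa⟩ := exists_mem_notMem_of_finrank_lt hlt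
    exact (hmin x hxΛ hxa).trans (mem_closedBall_zero_iff.1 hxr)

end SuccessiveMinima

section PlaneLattice

variable {E : Type*} [NormedAddCommGroup E] [NormedSpace ℝ E]

theorem norm_le_norm_zsmul_add_zsmul {a b : E} (hab : ‖a‖ ≤ ‖b‖)
    (hb : ∀ q : ℤ, ‖b‖ ≤ ‖q • a + b‖) {m n : ℤ} (hn : n ≠ 0) : ‖b‖ ≤ ‖m • a + n • b‖ := by
  wlog hn : 0 < n generalizing m n
  · have := this (m := -m) (n := -n) (by omega) (by omega)
    rwa [neg_smul, neg_smul, ← neg_add, norm_neg] at this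
  obtain ⟨q, r, hr, hrn, rfl⟩ : ∃ q r, 0 ≤ r ∧ r < n ∧ m = n * q + r :=
    ⟨m / n, m % n, Int.emod_nonneg m hn.ne', Int.emod_lt_of_pos m hn,
      (Int.mul_ediv_add_emod m n).symm⟩
  set v := (n * q + r) • a + n • b
  set w := q • a + b
  have hw : ‖b‖ ≤ ‖w‖ := hb q
  have hnR : (0 : ℝ) < n := by exact_mod_cast hn
  have hrR : (0 : ℝ) ≤ r := by exact_mod_cast hr
  have hrnR : (r : ℝ) ≤ n - 1 := by exact_mod_cast (by omega : r ≤ n - 1)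
  have key : (n : ℝ) * ‖w‖ ≤ ‖v‖ + ((n : ℝ) - 1) * ‖w‖ := calc
    (n : ℝ) * ‖w‖ = ‖v - r • a‖ := by
      rw [show v - r • a = n • w by module, norm_zsmul ℝ, Real.norm_eq_abs, abs_of_pos hnR]
    _ ≤ ‖v‖ + r * ‖a‖ := by
      grw [norm_sub_le, norm_zsmul ℝ, Real.norm_eq_abs, abs_of_nonneg hrR]
    _ ≤ ‖v‖ + ((n : ℝ) - 1) * ‖w‖ := by
      gcongr ‖v‖ + ?_ * ?_
      · linarith
      · exact hab.trans hw
  linarith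

theorem norm_le_of_mem_span_pair_of_notMem_span_singleton {a b v : E} (hab : ‖a‖ ≤ ‖b‖)
    (hb : ∀ q : ℤ, ‖b‖ ≤ ‖q • a + b‖) (hv : v ∈ span ℤ {a, b}) (hva : v ∉ ℝ ∙ a) :
    ‖b‖ ≤ ‖v‖ := by
  obtain ⟨m, n, rfl⟩ := mem_span_pair.1 hv
  refine norm_le_norm_zsmul_add_zsmul hab hb fun hn => hva ?_
  rw [hn, zero_smul, add_zero, ← Int.cast_smul_eq_zsmul ℝ]
  exact smul_mem _ _ (mem_span_singleton_self a)

end PlaneLattice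

theorem stmt_16_general {E : Type*} [NormedAddCommGroup E] [NormedSpace ℝ E]
    (hdim : Module.finrank ℝ E = 2)
    (B : Fin 2 → E)
    (b1 b2 : E)
    (hb1mem : b1 ∈ Submodule.span ℤ (Set.range B)) (hb10 : b1 ≠ 0)
    (hb1min : ∀ x ∈ Submodule.span ℤ (Set.range B), x ≠ 0 → ‖b1‖ ≤ ‖x‖)
    (hb2li : LinearIndependent ℝ ![b1, b2])
    (hb2span : Submodule.span ℤ ({b1, b2} : Set E) = Submodule.span ℤ (Set.range B))
    (hb2min : ∀ u : E, LinearIndependent ℝ ![b1, u] →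
      Submodule.span ℤ ({b1, u} : Set E) = Submodule.span ℤ (Set.range B) → ‖b2‖ ≤ ‖u‖) :
    ‖b1‖ = succMinE ((Submodule.span ℤ (Set.range B) : Submodule ℤ E) : Set E) 1 ∧
    ‖b2‖ = succMinE ((Submodule.span ℤ (Set.range B) : Submodule ℤ E) : Set E) 2 := by
  have : FiniteDimensional ℝ E := .of_finrank_pos (by omega)
  have hb2mem : b2 ∈ span ℤ (Set.range B) := hb2span ▸ subset_span (by simp)
  have h12 : ‖b1‖ ≤ ‖b2‖ := hb1min b2 hb2mem (hb2li.ne_zero 1)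
  have hb2shortest : ∀ q : ℤ, ‖b2‖ ≤ ‖q • b1 + b2‖ := fun q =>
    hb2min _ ((LinearIndependent.pair_add_smul_right_iff q).2 hb2li)
      (by rw [span_pair_smul_add_right, hb2span])
  refine ⟨(succMinE_one_eq_norm hb1mem hb10 hb1min).symm,
    (succMinE_two_eq_norm hb1mem hb2mem hb2li h12 fun x hx hxb1 => ?_).symm⟩
  exact norm_le_of_mem_span_pair_of_notMem_span_singleton h12 hb2shortest (hb2span ▸ hx) hxb1

/-- With an arbitrary norm on ℝ², if b₁ is a shortest nonzero lattice vector and b₂ is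
shortest among vectors completing b₁ to a ℤ-basis, then ‖b₁‖ = λ₁ and ‖b₂‖ = λ₂; in
particular every lattice in ℝ² is standard. -/
theorem stmt_16 {E : Type*} [NormedAddCommGroup E] [NormedSpace ℝ E]
    (hdim : Module.finrank ℝ E = 2)
    (B : Fin 2 → E) (hB : LinearIndependent ℝ B)
    (b1 b2 : E)
    (hb1mem : b1 ∈ Submodule.span ℤ (Set.range B)) (hb10 : b1 ≠ 0)
    (hb1min : ∀ x ∈ Submodule.span ℤ (Set.range B), x ≠ 0 → ‖b1‖ ≤ ‖x‖)
    (hb2li : LinearIndependent ℝ ![b1, b2])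
    (hb2span : Submodule.span ℤ ({b1, b2} : Set E) = Submodule.span ℤ (Set.range B))
    (hb2min : ∀ u : E, LinearIndependent ℝ ![b1, u] →
      Submodule.span ℤ ({b1, u} : Set E) = Submodule.span ℤ (Set.range B) → ‖b2‖ ≤ ‖u‖) :
    ‖b1‖ = succMinE ((Submodule.span ℤ (Set.range B) : Submodule ℤ E) : Set E) 1 ∧
    ‖b2‖ = succMinE ((Submodule.span ℤ (Set.range B) : Submodule ℤ E) : Set E) 2 :=
  stmt_16_general hdim B b1 b2 hb1mem hb10 hb1min hb2li hb2span hb2min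
end

section
/- For n ≥ 3, the lattice Λₙ = {a ∈ ℤⁿ : a₁ ≡ ⋯ ≡ aₙ (mod 2)} equipped with the L¹ norm is non-standard: its successive minima are λ₁ = ⋯ = λₙ = 2, but every ℤ-basis of Λₙ contains a vector with all coordinates odd, which has L¹ norm at least n > 2. -/
/-!
A vector of Λₙ has either all coordinates even or all coordinates odd. A nonzero even vector
has L¹ norm at least 2 and an odd one has norm at least n, so for n ≥ 2 the closed ball of
radius r < 2 meets Λₙ only in 0, while the vectors 2eᵢ of norm 2 span ℝⁿ: all successive
minima equal 2. A ℤ-basis of even vectors would only span vectors with even first coordinate,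
missing the all-ones vector of Λₙ, so some basis vector is odd and has norm at least n > 2.
-/

/-- The lattice Λₙ of integer vectors all of whose coordinates are congruent mod 2,
viewed inside ℝⁿ with the L¹ norm. -/
def Lat1 (n : ℕ) : Set (PiLp 1 fun _ : Fin n => ℝ) :=
  {x | ∃ a : Fin n → ℤ, (∀ i, x i = a i) ∧ ∀ i j, a i % 2 = a j % 2}

/-- The i-th successive minimum of a lattice in ℝⁿ with the L¹ norm. -/
noncomputable def succMin1 (n : ℕ) (Λ : Set (PiLp 1 fun _ : Fin n => ℝ)) (i : ℕ) : ℝ :=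
  sInf {r : ℝ | i ≤ Module.finrank ℝ (Submodule.span ℝ (Λ ∩ Metric.closedBall 0 r))}

section L1Norm

variable {ι : Type*} [Fintype ι]

lemma PiLp.card_le_norm_of_odd (x : PiLp 1 fun _ : ι => ℝ)
    (hx : ∀ i, ∃ m : ℤ, x i = 2 * m + 1) : (Fintype.card ι : ℝ) ≤ ‖x‖ := by
  have hcoord (i : ι) : (1 : ℝ) ≤ ‖x i‖ := by
    obtain ⟨m, hm⟩ := hx i
    -- `x i` has the unreduced type `(fun _ => ℝ) i`, so the numerals in `hm` are casts from `ℤ`.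
    have hm' : x i = ((2 * m + 1 : ℤ) : ℝ) := by push_cast at hm ⊢; exact hm
    have : (1 : ℤ) ≤ |2 * m + 1| := Int.one_le_abs (by omega)
    rw [hm', Real.norm_eq_abs, ← Int.cast_abs]
    exact_mod_cast this
  calc (Fintype.card ι : ℝ) = ∑ _i : ι, (1 : ℝ) := by simp
    _ ≤ ∑ i, ‖x i‖ := Finset.sum_le_sum fun i _ => hcoord i
    _ = ‖x‖ := (PiLp.norm_eq_of_L1 x).symm

lemma PiLp.two_le_norm_of_even {p : ENNReal} [Fact (1 ≤ p)] (x : PiLp p fun _ : ι => ℝ)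
    (hx : ∀ i, ∃ m : ℤ, x i = 2 * m) (hx0 : x ≠ 0) : 2 ≤ ‖x‖ := by
  obtain ⟨i, hi⟩ : ∃ i, x i ≠ 0 := by
    by_contra! h
    exact hx0 (PiLp.ext h)
  obtain ⟨m, hm⟩ := hx i
  have hm' : x i = ((2 * m : ℤ) : ℝ) := by push_cast at hm ⊢; exact hm
  have hm0 : m ≠ 0 := by rintro rfl; simp [hm'] at hi
  have : (2 : ℤ) ≤ |2 * m| := by
    rw [abs_mul]
    have := Int.one_le_abs hm0
    norm_num
    omega
  calc (2 : ℝ) ≤ ‖x i‖ := by rw [hm', Real.norm_eq_abs, ← Int.cast_abs]; exact_mod_cast this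
    _ ≤ ‖x‖ := PiLp.norm_apply_le x i

end L1Norm

section Lat1

variable {n : ℕ}

lemma even_or_odd_of_mem_Lat1 {x : PiLp 1 fun _ : Fin n => ℝ} (hx : x ∈ Lat1 n) :
    (∀ i, ∃ m : ℤ, x i = 2 * m) ∨ ∀ i, ∃ m : ℤ, x i = 2 * m + 1 := by
  obtain ⟨a, ha, hpar⟩ := hx
  by_cases heven : ∀ i, a i % 2 = 0
  · left
    intro i
    refine ⟨a i / 2, ?_⟩
    have : a i = 2 * (a i / 2) := by have := heven i; omega
    rw [ha i]; push_cast; exact_mod_cast this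
  · right
    obtain ⟨j, hj⟩ := not_forall.mp heven
    intro i
    refine ⟨a i / 2, ?_⟩
    have : a i = 2 * (a i / 2) + 1 := by have := hpar i j; omega
    rw [ha i]; push_cast; exact_mod_cast this

lemma eq_zero_of_mem_Lat1_of_norm_lt_two (hn : 2 ≤ n) {x : PiLp 1 fun _ : Fin n => ℝ}
    (hx : x ∈ Lat1 n) (hnorm : ‖x‖ < 2) : x = 0 := by
  by_contra hx0
  rcases even_or_odd_of_mem_Lat1 hx with heven | hodd
  · linarith [PiLp.two_le_norm_of_even x heven hx0]
  · have := PiLp.card_le_norm_of_odd x hodd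
    rw [Fintype.card_fin] at this
    have : (2 : ℝ) ≤ n := by exact_mod_cast hn
    linarith

lemma span_Lat1_inter_closedBall_of_lt_two (hn : 2 ≤ n) {r : ℝ} (hr : r < 2) :
    Submodule.span ℝ (Lat1 n ∩ Metric.closedBall 0 r) = ⊥ := by
  rw [Submodule.span_eq_bot]
  rintro x ⟨hx, hxr⟩
  rw [mem_closedBall_zero_iff] at hxr
  exact eq_zero_of_mem_Lat1_of_norm_lt_two hn hx (hxr.trans_lt hr)

lemma span_Lat1_inter_closedBall_of_two_le {r : ℝ} (hr : 2 ≤ r) :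
    Submodule.span ℝ (Lat1 n ∩ Metric.closedBall 0 r) = ⊤ := by
  classical
  rw [eq_top_iff, ← (PiLp.basisFun 1 ℝ (Fin n)).span_eq, Submodule.span_le]
  rintro _ ⟨i, rfl⟩
  have hmem : PiLp.single 1 i (2 : ℝ) ∈ Lat1 n ∩ Metric.closedBall 0 r := by
    refine ⟨⟨fun j => if j = i then 2 else 0, fun j => ?_, fun j k => ?_⟩, ?_⟩
    · by_cases h : j = i <;> simp [PiLp.single_apply, h]
    · by_cases h : j = i <;> by_cases h' : k = i <;> simp [h, h']
    · rw [mem_closedBall_zero_iff, PiLp.norm_single, Real.norm_two]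
      exact hr
  have hbasis : PiLp.basisFun 1 ℝ (Fin n) i = (2⁻¹ : ℝ) • PiLp.single 1 i (2 : ℝ) := by
    ext j
    by_cases h : j = i <;> simp [PiLp.basisFun_apply, h]
  rw [SetLike.mem_coe, hbasis]
  exact Submodule.smul_mem _ _ (Submodule.subset_span hmem)

lemma succMin1_Lat1 (hn : 2 ≤ n) {i : ℕ} (hi0 : 0 < i) (hin : i ≤ n) :
    succMin1 n (Lat1 n) i = 2 := by
  have hset : {r : ℝ | i ≤ Module.finrank ℝ
      (Submodule.span ℝ (Lat1 n ∩ Metric.closedBall 0 r))} = Set.Ici 2 := by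
    ext r
    simp only [Set.mem_ofPred_eq, Set.mem_Ici]
    constructor
    · intro h
      by_contra! hr
      rw [span_Lat1_inter_closedBall_of_lt_two hn hr, finrank_bot] at h
      omega
    · intro hr
      rw [span_Lat1_inter_closedBall_of_two_le hr, finrank_top,
        Module.finrank_eq_card_basis (PiLp.basisFun 1 ℝ (Fin n)), Fintype.card_fin]
      exact hin
  rw [succMin1, hset, csInf_Ici]

lemma exists_odd_of_span_eq_Lat1 (hn : 0 < n) {ι : Type*} (b : ι → PiLp 1 fun _ : Fin n => ℝ)
    (hspan : ((Submodule.span ℤ (Set.range b) :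
      Submodule ℤ (PiLp 1 fun _ : Fin n => ℝ)) : Set _) = Lat1 n) :
    ∃ k, ∀ i, ∃ m : ℤ, b k i = 2 * m + 1 := by
  set i₀ : Fin n := ⟨0, hn⟩
  by_contra hnotodd
  have heven (k : ι) : ∃ m : ℤ, b k i₀ = 2 * m := by
    have hk : b k ∈ Lat1 n := hspan ▸ Submodule.subset_span ⟨k, rfl⟩
    exact (even_or_odd_of_mem_Lat1 hk).resolve_right (fun hodd => hnotodd ⟨k, hodd⟩) i₀
  have hspan_even {x} (hx : x ∈ Submodule.span ℤ (Set.range b)) : ∃ m : ℤ, x i₀ = 2 * m := by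
    induction hx using Submodule.span_induction with
    | mem _ hx => obtain ⟨k, rfl⟩ := hx; exact heven k
    | zero => exact ⟨0, by simp⟩
    | add x y _ _ hx hy =>
      obtain ⟨mx, hmx⟩ := hx
      obtain ⟨my, hmy⟩ := hy
      exact ⟨mx + my, by rw [PiLp.add_apply, hmx, hmy]; push_cast; ring⟩
    | smul c x _ hx =>
      obtain ⟨mx, hmx⟩ := hx
      exact ⟨c * mx, by rw [PiLp.smul_apply, zsmul_eq_mul, hmx]; push_cast; ring⟩
  have hones : WithLp.toLp 1 (fun _ : Fin n => (1 : ℝ)) ∈ Lat1 n :=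
    ⟨fun _ => 1, fun _ => by simp, fun _ _ => rfl⟩
  obtain ⟨m, hm⟩ := hspan_even (SetLike.mem_coe.mp (hspan ▸ hones))
  have : (1 : ℤ) = 2 * m := by push_cast at hm; exact_mod_cast hm
  omega

end Lat1

/-- For n ≥ 3, the lattice Λₙ with the L¹ norm is non-standard: its successive minima
all equal 2, but every ℤ-basis contains a vector with all coordinates odd, whose L¹ norm
is at least n > 2; so no ℤ-basis achieves the successive minima. -/
theorem stmt_19 (n : ℕ) (hn : 3 ≤ n) :
    (∀ i : Fin n, succMin1 n (Lat1 n) (i + 1) = 2) ∧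
    (2 : ℝ) < n ∧
    ∀ b : Fin n → PiLp 1 (fun _ : Fin n => ℝ),
      LinearIndependent ℝ b →
      ((Submodule.span ℤ (Set.range b) :
          Submodule ℤ (PiLp 1 fun _ : Fin n => ℝ)) : Set _) = Lat1 n →
      (∃ k : Fin n, (∀ i, ∃ m : ℤ, b k i = 2 * m + 1) ∧ (n : ℝ) ≤ ‖b k‖) ∧
      ¬ ∀ i : Fin n, ‖b i‖ = succMin1 n (Lat1 n) (i + 1) := by
  have hmin (i : Fin n) : succMin1 n (Lat1 n) (i + 1) = 2 :=
    succMin1_Lat1 (by omega) i.val.succ_pos i.isLt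
  have hn' : (2 : ℝ) < n := by exact_mod_cast hn
  refine ⟨hmin, hn', fun b _ hspan => ?_⟩
  obtain ⟨k, hk⟩ := exists_odd_of_span_eq_Lat1 (by omega) b hspan
  have hnorm : (n : ℝ) ≤ ‖b k‖ := by simpa using PiLp.card_le_norm_of_odd (b k) hk
  refine ⟨⟨k, hk, hnorm⟩, fun hall => ?_⟩
  rw [hall k, hmin k] at hnorm
  linarith
end
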